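/- arXiv:2502.00179 — 2 statements merged into one kernel-verified Lean document; each statement's English description precedes it below -/
import Mathlib

section
/- Let (M_k) be any family of ℂ-linear maps on d^n × d^n complex matrices indexed by k ∈ (ℤ/dℤ)^n. Then the generalized Pauli fidelities are invariant under randomized compiling with ideal gates: for all a, b, x, s, t ∈ (ℤ/dℤ)^n, d^{-n} · Σ_{k ∈ (ℤ/dℤ)^n} χ_k(s−t)* · Tr[ (Z^t)† · X^x Z^a · M_{k−x}( Z^b (X^x)† · Z^s · X^x (Z^b)† ) · (Z^a)† (X^x)† ] = ν̃_{s,t}(M). In particular the left-hand side is independent of a, b and x. -/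
open scoped BigOperators
open Matrix

/-- Index set `(ℤ/dℤ)^n`. -/
abbrev QIdx (d n : ℕ) := Fin n → ZMod d

/-- `d^n × d^n` complex matrices, indexed by `(ℤ/dℤ)^n`. -/
abbrev QMat (d n : ℕ) := Matrix (QIdx d n) (QIdx d n) ℂ

/-- The character `χ_z(j) = exp(2πi (z·j) / d)`. -/
noncomputable def chi (d n : ℕ) (z j : QIdx d n) : ℂ :=
  Complex.exp (2 * Real.pi * Complex.I * ((∑ i, (z i).val * (j i).val : ℕ) : ℂ) / d)

/-- The Weyl operator `X^x`, acting by `X^x |j⟩ = |j + x⟩`. -/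
noncomputable def WX (d n : ℕ) (x : QIdx d n) : QMat d n :=
  Matrix.of fun a b => if a = b + x then (1 : ℂ) else 0

/-- The Weyl operator `Z^z`, acting by `Z^z |j⟩ = χ_z(j) |j⟩`. -/
noncomputable def WZ (d n : ℕ) (z : QIdx d n) : QMat d n :=
  Matrix.diagonal fun j => chi d n z j

/-- The generalized Pauli fidelities
`ν̃_{s,t}(M) = d^{-n} Σ_k χ_k(s−t)^* Tr((Z^t)† M_k(Z^s))`. -/
noncomputable def gpf (d n : ℕ) [NeZero d]
    (M : QIdx d n → (QMat d n →ₗ[ℂ] QMat d n)) (s t : QIdx d n) : ℂ :=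
  (1 / (d : ℂ) ^ n) *
    ∑ k : QIdx d n, (starRingEnd ℂ) (chi d n k (s - t)) * ((WZ d n t)ᴴ * M k (WZ d n s)).trace

/-- The randomized compilation
`M̂_k = d^{-3n} Σ_{a,b,x} 𝒳^x ∘ 𝒵^a ∘ M_{k−x} ∘ 𝒵^b ∘ 𝒳^{−x}`. -/
noncomputable def rc (d n : ℕ) [NeZero d]
    (M : QIdx d n → (QMat d n →ₗ[ℂ] QMat d n)) (k : QIdx d n) (ρ : QMat d n) : QMat d n :=
  (1 / (d : ℂ) ^ (3 * n)) •
    ∑ a : QIdx d n, ∑ b : QIdx d n, ∑ x : QIdx d n,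
      WX d n x * WZ d n a *
        (M (k - x) (WZ d n b * (WX d n (-x) * ρ * (WX d n (-x))ᴴ) * (WZ d n b)ᴴ)) *
        (WZ d n a)ᴴ * (WX d n x)ᴴ

section AuxLemmas

lemma exp_period (d : ℕ) [NeZero d] {a b : ℕ} (h : (a : ZMod d) = b) :
    Complex.exp (2 * Real.pi * Complex.I * (a : ℂ) / d)
      = Complex.exp (2 * Real.pi * Complex.I * (b : ℂ) / d) := by
  rw [ZMod.natCast_eq_natCast_iff] at h
  obtain ⟨k, hk⟩ := h.dvd
  have hd : (d : ℂ) ≠ 0 := Nat.cast_ne_zero.mpr (NeZero.ne d)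
  have hb : (b : ℂ) = a + d * k := by
    have : (b : ℤ) = a + d * k := by linarith
    exact_mod_cast congrArg (Int.cast : ℤ → ℂ) this
  rw [show 2 * Real.pi * Complex.I * (b : ℂ) / d
        = 2 * Real.pi * Complex.I * (a : ℂ) / d + k * (2 * Real.pi * Complex.I) by
      rw [hb]; field_simp]
  rw [Complex.exp_add, Complex.exp_int_mul_two_pi_mul_I, mul_one]

lemma chi_add_right (d n : ℕ) [NeZero d] (z j j' : QIdx d n) :
    chi d n z (j + j') = chi d n z j * chi d n z j' := by
  unfold chi
  rw [← Complex.exp_add,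
    show 2 * Real.pi * Complex.I * ((∑ i, (z i).val * (j i).val : ℕ) : ℂ) / d
        + 2 * Real.pi * Complex.I * ((∑ i, (z i).val * (j' i).val : ℕ) : ℂ) / d
      = 2 * Real.pi * Complex.I
          * (((∑ i, (z i).val * (j i).val) + (∑ i, (z i).val * (j' i).val) : ℕ) : ℂ) / d by
      push_cast; ring]
  exact exp_period d (by
    push_cast [ZMod.natCast_val]
    simp [Pi.add_apply, mul_add, Finset.sum_add_distrib])

lemma chi_comm (d n : ℕ) (z j : QIdx d n) : chi d n z j = chi d n j z := by
  unfold chi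
  rw [show (∑ i, (z i).val * (j i).val) = ∑ i, (j i).val * (z i).val from
    Finset.sum_congr rfl fun i _ => Nat.mul_comm _ _]

lemma chi_mul_conj (d n : ℕ) (z j : QIdx d n) :
    chi d n z j * (starRingEnd ℂ) (chi d n z j) = 1 := by
  unfold chi
  rw [← Complex.exp_conj, ← Complex.exp_add]
  rw [show (starRingEnd ℂ) (2 * Real.pi * Complex.I * ((∑ i, (z i).val * (j i).val : ℕ) : ℂ) / d)
      = -(2 * Real.pi * Complex.I * ((∑ i, (z i).val * (j i).val : ℕ) : ℂ) / d) by
    simp [map_div₀, Complex.conj_I, map_ofNat]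
    ring]
  simp

lemma conj_chi_mul (d n : ℕ) (z j : QIdx d n) :
    (starRingEnd ℂ) (chi d n z j) * chi d n z j = 1 := by
  rw [mul_comm]; exact chi_mul_conj d n z j

variable {d n : ℕ} [NeZero d]

omit [NeZero d] in
lemma WX_conjTranspose (x : QIdx d n) : (WX d n x)ᴴ = WX d n (-x) := by
  ext i j
  simp only [WX, conjTranspose_apply, Matrix.of_apply]
  by_cases h : j = i + x
  · simp [h]
  · rw [if_neg h, if_neg (by intro h'; exact h (by rw [h']; abel)), star_zero]

lemma WX_mul_apply (x : QIdx d n) (N : QMat d n) (i j : QIdx d n) :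
    (WX d n x * N) i j = N (i - x) j := by
  rw [Matrix.mul_apply]
  rw [Finset.sum_eq_single (i - x)]
  · simp [WX]
  · intro p _ hp
    rw [WX, Matrix.of_apply, if_neg (fun h => hp (by rw [h]; abel)), zero_mul]
  · simp

lemma mul_WX_apply (x : QIdx d n) (N : QMat d n) (i j : QIdx d n) :
    (N * WX d n x) i j = N i (j + x) := by
  rw [Matrix.mul_apply]
  rw [Finset.sum_eq_single (j + x)]
  · simp [WX]
  · intro p _ hp
    rw [WX, Matrix.of_apply, if_neg (fun h => hp h), mul_zero]
  · simp

lemma WX_conj_diag (x : QIdx d n) (f : QIdx d n → ℂ) :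
    (WX d n x)ᴴ * Matrix.diagonal f * WX d n x = Matrix.diagonal fun j => f (j + x) := by
  rw [WX_conjTranspose]
  ext i j
  rw [mul_WX_apply, WX_mul_apply, sub_neg_eq_add]
  by_cases h : i = j
  · simp [h, Matrix.diagonal_apply_eq]
  · rw [Matrix.diagonal_apply_ne _ (fun h' => h (by simpa using h')),
      Matrix.diagonal_apply_ne _ h]

lemma diag_sandwich (g : QIdx d n) (f : QIdx d n → ℂ) :
    Matrix.diagonal (fun j => chi d n g j) * Matrix.diagonal f
      * (Matrix.diagonal fun j => chi d n g j)ᴴ = Matrix.diagonal f := by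
  rw [Matrix.diagonal_conjTranspose, Matrix.diagonal_mul_diagonal,
    Matrix.diagonal_mul_diagonal]
  have : (fun i => chi d n g i * f i * (star fun j => chi d n g j) i) = f := by
    funext i
    simp only [Pi.star_apply, Complex.star_def]
    rw [mul_comm (chi d n g i) (f i), mul_assoc, chi_mul_conj, mul_one]
  rw [this]

lemma diag_sandwich' (g : QIdx d n) (f : QIdx d n → ℂ) :
    (Matrix.diagonal fun j => chi d n g j)ᴴ * Matrix.diagonal f
      * Matrix.diagonal (fun j => chi d n g j) = Matrix.diagonal f := by
  rw [Matrix.diagonal_conjTranspose, Matrix.diagonal_mul_diagonal,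
    Matrix.diagonal_mul_diagonal]
  have : (fun i => (star fun j => chi d n g j) i * f i * chi d n g i) = f := by
    funext i
    simp only [Pi.star_apply, Complex.star_def]
    rw [mul_comm ((starRingEnd ℂ) (chi d n g i)) (f i), mul_assoc, conj_chi_mul, mul_one]
  rw [this]

lemma arg_simp (b x s : QIdx d n) :
    WZ d n b * (WX d n x)ᴴ * WZ d n s * WX d n x * (WZ d n b)ᴴ
      = chi d n s x • WZ d n s := by
  simp only [WZ]
  have h1 : (WX d n x)ᴴ * Matrix.diagonal (fun j => chi d n s j) * WX d n x
      = chi d n s x • Matrix.diagonal fun j => chi d n s j := by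
    rw [WX_conj_diag, ← Matrix.diagonal_smul]
    have : (fun j => chi d n s (j + x)) = chi d n s x • fun j => chi d n s j := by
      funext j
      rw [Pi.smul_apply, chi_add_right, smul_eq_mul, mul_comm]
    rw [this]
  calc Matrix.diagonal (fun j => chi d n b j) * (WX d n x)ᴴ
        * Matrix.diagonal (fun j => chi d n s j) * WX d n x
        * (Matrix.diagonal fun j => chi d n b j)ᴴ
      = Matrix.diagonal (fun j => chi d n b j)
          * ((WX d n x)ᴴ * Matrix.diagonal (fun j => chi d n s j) * WX d n x)
          * (Matrix.diagonal fun j => chi d n b j)ᴴ := by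
        simp only [Matrix.mul_assoc]
    _ = chi d n s x • (Matrix.diagonal (fun j => chi d n b j)
          * Matrix.diagonal (fun j => chi d n s j)
          * (Matrix.diagonal fun j => chi d n b j)ᴴ) := by
        rw [h1]; simp only [Matrix.mul_smul, Matrix.smul_mul]
    _ = chi d n s x • Matrix.diagonal fun j => chi d n s j := by rw [diag_sandwich]

lemma trace_twirl (a x t : QIdx d n) (P : QMat d n) :
    ((WZ d n t)ᴴ * (WX d n x * WZ d n a * P * (WZ d n a)ᴴ * (WX d n x)ᴴ)).trace
      = (starRingEnd ℂ) (chi d n t x) * ((WZ d n t)ᴴ * P).trace := by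
  have hWZt : (WZ d n t)ᴴ = Matrix.diagonal (star fun j => chi d n t j) := by
    rw [WZ, Matrix.diagonal_conjTranspose]
  have inner : (WX d n x)ᴴ * (WZ d n t)ᴴ * WX d n x
      = (starRingEnd ℂ) (chi d n t x) • (WZ d n t)ᴴ := by
    rw [hWZt, WX_conj_diag, ← Matrix.diagonal_smul]
    have : (fun j => (star fun j' => chi d n t j') (j + x))
        = (starRingEnd ℂ) (chi d n t x) • star fun j => chi d n t j := by
      funext j
      simp only [Pi.star_apply, Pi.smul_apply, Complex.star_def, smul_eq_mul]
      rw [chi_add_right, RingHom.map_mul, mul_comm]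
    rw [this]
  have key : (WZ d n a)ᴴ * ((WX d n x)ᴴ * (WZ d n t)ᴴ * WX d n x) * WZ d n a
      = (starRingEnd ℂ) (chi d n t x) • (WZ d n t)ᴴ := by
    rw [inner, Matrix.mul_smul, Matrix.smul_mul, hWZt, WZ, diag_sandwich']
  calc ((WZ d n t)ᴴ * (WX d n x * WZ d n a * P * (WZ d n a)ᴴ * (WX d n x)ᴴ)).trace
      = (((WZ d n t)ᴴ * (WX d n x * WZ d n a)) * (P * ((WZ d n a)ᴴ * (WX d n x)ᴴ))).trace := by
        simp only [Matrix.mul_assoc]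
    _ = ((P * ((WZ d n a)ᴴ * (WX d n x)ᴴ)) * ((WZ d n t)ᴴ * (WX d n x * WZ d n a))).trace := by
        rw [Matrix.trace_mul_comm]
    _ = (P * ((WZ d n a)ᴴ * ((WX d n x)ᴴ * (WZ d n t)ᴴ * WX d n x) * WZ d n a)).trace := by
        simp only [Matrix.mul_assoc]
    _ = (starRingEnd ℂ) (chi d n t x) * ((WZ d n t)ᴴ * P).trace := by
        rw [key, Matrix.mul_smul, Matrix.trace_smul, smul_eq_mul, Matrix.trace_mul_comm]

lemma chi_key (k x s t : QIdx d n) :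
    (starRingEnd ℂ) (chi d n (k + x) (s - t)) * (chi d n s x * (starRingEnd ℂ) (chi d n t x))
      = (starRingEnd ℂ) (chi d n k (s - t)) := by
  have hadd : chi d n (k + x) (s - t) = chi d n k (s - t) * chi d n x (s - t) := by
    rw [chi_comm, chi_add_right, chi_comm d n (s - t) k, chi_comm d n (s - t) x]
  have hs : chi d n x (s - t) * chi d n x t = chi d n x s := by
    rw [← chi_add_right, sub_add_cancel]
  have h1 : chi d n s x = chi d n x (s - t) * chi d n x t := by rw [hs, chi_comm]
  rw [hadd, RingHom.map_mul, h1, chi_comm d n t x]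
  calc (starRingEnd ℂ) (chi d n k (s - t)) * (starRingEnd ℂ) (chi d n x (s - t)) *
        (chi d n x (s - t) * chi d n x t * (starRingEnd ℂ) (chi d n x t))
      = (starRingEnd ℂ) (chi d n k (s - t)) *
          (((starRingEnd ℂ) (chi d n x (s - t)) * chi d n x (s - t)) *
            (chi d n x t * (starRingEnd ℂ) (chi d n x t))) := by ring
    _ = (starRingEnd ℂ) (chi d n k (s - t)) := by
        rw [conj_chi_mul, chi_mul_conj, one_mul, mul_one]

end AuxLemmas

/-- The generalized Pauli fidelities are invariant under randomized
compiling with ideal gates: for all `a b x s t`,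
`d^{-n} Σ_k χ_k(s−t)^* Tr[(Z^t)† X^x Z^a M_{k−x}(Z^b (X^x)† Z^s X^x (Z^b)†) (Z^a)† (X^x)†]
  = ν̃_{s,t}(M)`. -/
theorem gpf_invariant_under_randomized_compiling
    (d n : ℕ) [NeZero d] (hd : 2 ≤ d) (hn : 1 ≤ n)
    (M : QIdx d n → (QMat d n →ₗ[ℂ] QMat d n))
    (a b x s t : QIdx d n) :
    (1 / (d : ℂ) ^ n) *
      ∑ k : QIdx d n, (starRingEnd ℂ) (chi d n k (s - t)) *
        ((WZ d n t)ᴴ *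
          (WX d n x * WZ d n a *
            (M (k - x) (WZ d n b * (WX d n x)ᴴ * WZ d n s * WX d n x * (WZ d n b)ᴴ)) *
            (WZ d n a)ᴴ * (WX d n x)ᴴ)).trace
      = gpf d n M s t := by
  rw [gpf]
  congr 1
  have step1 : ∀ k : QIdx d n,
      (starRingEnd ℂ) (chi d n k (s - t)) *
        ((WZ d n t)ᴴ *
          (WX d n x * WZ d n a *
            (M (k - x) (WZ d n b * (WX d n x)ᴴ * WZ d n s * WX d n x * (WZ d n b)ᴴ)) *
            (WZ d n a)ᴴ * (WX d n x)ᴴ)).trace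
      = (starRingEnd ℂ) (chi d n k (s - t)) *
          (chi d n s x * ((starRingEnd ℂ) (chi d n t x) *
            ((WZ d n t)ᴴ * M (k - x) (WZ d n s)).trace)) := by
    intro k
    rw [arg_simp, LinearMap.map_smul]
    rw [show WX d n x * WZ d n a * (chi d n s x • M (k - x) (WZ d n s)) * (WZ d n a)ᴴ * (WX d n x)ᴴ
        = chi d n s x • (WX d n x * WZ d n a * M (k - x) (WZ d n s) * (WZ d n a)ᴴ * (WX d n x)ᴴ) by
      simp only [Matrix.mul_smul, Matrix.smul_mul]]
    rw [Matrix.mul_smul, Matrix.trace_smul, smul_eq_mul, trace_twirl]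
  rw [Finset.sum_congr rfl fun k _ => step1 k]
  exact Fintype.sum_equiv (Equiv.addRight x)
    (fun k => (starRingEnd ℂ) (chi d n k (s - t)) * ((WZ d n t)ᴴ * M k (WZ d n s)).trace)
    _
    (fun k => by
      simp only [Equiv.coe_addRight, add_sub_cancel_right]
      rw [← chi_key k x s t]
      ring) |>.symm
end

section
/- Let (M_k) be any family of ℂ-linear maps on d^n × d^n complex matrices indexed by k ∈ (ℤ/dℤ)^n, let M̂_k be its randomized compilation, and for a, b ∈ (ℤ/dℤ)^n define ν_{a,b} = d^{-2n} Σ_{s,t ∈ (ℤ/dℤ)^n} ν̃_{s,t}(M) · χ_s(a)* · χ_t(b). Then for every k ∈ (ℤ/dℤ)^n and every d^n × d^n complex matrix ρ, M̂_k(ρ) = Σ_{a,b ∈ (ℤ/dℤ)^n} ν_{a,b} · ⟨k+a| ρ |k+a⟩ · |k+b⟩⟨k+b|. -/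
open scoped BigOperators
open Matrix

namespace RCAux

variable {d n : ℕ} [NeZero d]

/-- The dot product as an additive hom in the first variable. -/
def dotHom (d n : ℕ) (j : QIdx d n) : QIdx d n →+ ZMod d where
  toFun z := ∑ i, z i * j i
  map_zero' := by simp
  map_add' a b := by simp [add_mul, Finset.sum_add_distrib]

noncomputable def psi (d n : ℕ) [NeZero d] (j : QIdx d n) : AddChar (QIdx d n) ℂ :=
  (ZMod.stdAddChar).compAddMonoidHom (dotHom d n j)

lemma psi_apply (j z : QIdx d n) : psi d n j z = ZMod.stdAddChar (∑ i, z i * j i) := rfl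

lemma chi_eq (z j : QIdx d n) : chi d n z j = ZMod.stdAddChar (∑ i, z i * j i) := by
  have h1 : ((∑ i, (z i).val * (j i).val : ℕ) : ZMod d) = ∑ i, z i * j i := by
    push_cast [ZMod.natCast_val, ZMod.cast_id]
    rfl
  have h2 := ZMod.stdAddChar_coe (N := d) ((∑ i, (z i).val * (j i).val : ℕ) : ℤ)
  rw [chi, ← h1]
  push_cast at h2 ⊢
  rw [h2]



lemma stdAddChar_conj (m : ZMod d) :
    (starRingEnd ℂ) (ZMod.stdAddChar m) = ZMod.stdAddChar (-m) := by
  rw [ZMod.stdAddChar_apply, ZMod.stdAddChar_apply, AddChar.map_neg_eq_inv]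
  exact (Circle.coe_inv_eq_conj _).symm

lemma chi_conj (z j : QIdx d n) :
    (starRingEnd ℂ) (chi d n z j) = chi d n z (-j) := by
  rw [chi_eq, chi_eq, stdAddChar_conj]
  congr 1
  simp [Finset.sum_neg_distrib, mul_neg]

lemma chi_mul (z j j' : QIdx d n) :
    chi d n z j * chi d n z j' = chi d n z (j + j') := by
  rw [chi_eq, chi_eq, chi_eq, ← AddChar.map_add_eq_mul]
  congr 1
  simp [mul_add, Finset.sum_add_distrib]

lemma chi_mul_conj (z u v : QIdx d n) :
    chi d n z u * (starRingEnd ℂ) (chi d n z v) = chi d n z (u - v) := by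
  rw [chi_conj, chi_mul, sub_eq_add_neg]

lemma chi_comm (z j : QIdx d n) : chi d n z j = chi d n j z := by
  rw [chi_eq, chi_eq]
  congr 1
  exact Finset.sum_congr rfl fun i _ => mul_comm _ _

lemma psi_eq_zero_iff (j : QIdx d n) : psi d n j = 0 ↔ j = 0 := by
  constructor
  · intro h
    by_contra hj
    obtain ⟨i0, hi0⟩ : ∃ i0, j i0 ≠ 0 := by
      by_contra hc
      push_neg at hc
      exact hj (funext hc)
    set z0 : QIdx d n := Pi.single i0 1 with hz0
    have h1 : psi d n j z0 = 1 := by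
      rw [h]; simp
    rw [psi_apply] at h1
    have h2 : (∑ i, z0 i * j i) = j i0 := by
      rw [Finset.sum_eq_single i0]
      · simp [hz0]
      · intro b _ hb
        rw [hz0]; simp [Pi.single_eq_of_ne hb]
      · simp
    rw [h2] at h1
    have h3 : ZMod.stdAddChar (j i0) = ZMod.stdAddChar (0 : ZMod d) := by
      rw [h1]; simp
    exact hi0 (ZMod.injective_stdAddChar h3)
  · rintro rfl
    ext z
    rw [psi_apply]
    simp

lemma sum_chi (m : QIdx d n) :
    ∑ z : QIdx d n, chi d n z m = if m = 0 then ((d : ℂ) ^ n) else 0 := by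
  classical
  have h : ∀ z, chi d n z m = psi d n m z := fun z => chi_eq z m
  simp_rw [h]
  rw [AddChar.sum_eq_ite]
  have hcard : (Fintype.card (QIdx d n) : ℂ) = (d : ℂ) ^ n := by
    simp [Fintype.card_fun, ZMod.card]
  rw [hcard]
  by_cases hm : m = 0
  · rw [if_pos ((psi_eq_zero_iff m).mpr hm), if_pos hm]
  · rw [if_neg (fun h0 => hm ((psi_eq_zero_iff m).mp h0)), if_neg hm]


lemma WX_mul_apply (x : QIdx d n) (A : QMat d n) (p q : QIdx d n) :
    (WX d n x * A) p q = A (p - x) q := by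
  rw [Matrix.mul_apply]
  rw [Finset.sum_eq_single (p - x)]
  · simp [WX, sub_add_cancel]
  · intro b _ hb
    have hne : p ≠ b + x := fun h => hb (by rw [h]; simp)
    simp [WX, hne]
  · simp

lemma mul_WXconj_apply (x : QIdx d n) (A : QMat d n) (p q : QIdx d n) :
    (A * (WX d n x)ᴴ) p q = A p (q - x) := by
  rw [Matrix.mul_apply]
  rw [Finset.sum_eq_single (q - x)]
  · simp [WX, Matrix.conjTranspose_apply, sub_add_cancel]
  · intro b _ hb
    have hne : q ≠ b + x := fun h => hb (by rw [h]; simp)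
    simp [WX, Matrix.conjTranspose_apply, hne]
  · simp

lemma WZ_sandwich_apply (b : QIdx d n) (A : QMat d n) (i j : QIdx d n) :
    (WZ d n b * A * (WZ d n b)ᴴ) i j
      = chi d n b i * (starRingEnd ℂ) (chi d n b j) * A i j := by
  rw [WZ, Matrix.diagonal_conjTranspose, Matrix.mul_diagonal, Matrix.diagonal_mul]
  simp only [Pi.star_apply, Complex.star_def]
  ring

lemma sandwich_apply (x a : QIdx d n) (N : QMat d n) (p q : QIdx d n) :
    (WX d n x * WZ d n a * N * (WZ d n a)ᴴ * (WX d n x)ᴴ) p q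
      = chi d n a (p - x) * (starRingEnd ℂ) (chi d n a (q - x)) * N (p - x) (q - x) := by
  rw [mul_WXconj_apply, Matrix.mul_assoc (WX d n x) (WZ d n a) N,
    Matrix.mul_assoc (WX d n x) (WZ d n a * N) ((WZ d n a)ᴴ), WX_mul_apply]
  rw [WZ_sandwich_apply]

lemma inner_apply (x b : QIdx d n) (ρ : QMat d n) (i j : QIdx d n) :
    (WZ d n b * (WX d n (-x) * ρ * (WX d n (-x))ᴴ) * (WZ d n b)ᴴ) i j
      = chi d n b i * (starRingEnd ℂ) (chi d n b j) * ρ (i + x) (j + x) := by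
  rw [WZ_sandwich_apply, mul_WXconj_apply, WX_mul_apply, sub_neg_eq_add, sub_neg_eq_add]

lemma map_matrix_apply (L : QMat d n →ₗ[ℂ] QMat d n) (σ : QMat d n) (p q : QIdx d n) :
    (L σ) p q = ∑ i : QIdx d n, ∑ j : QIdx d n,
      σ i j * (L (Matrix.single i j (1 : ℂ))) p q := by
  have hσ : σ = ∑ i : QIdx d n, ∑ j : QIdx d n,
      σ i j • Matrix.single i j (1 : ℂ) := by
    conv_lhs => rw [Matrix.matrix_eq_sum_single σ]
    refine Finset.sum_congr rfl fun i _ => Finset.sum_congr rfl fun j _ => ?_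
    rw [Matrix.smul_single, smul_eq_mul, mul_one]
  conv_lhs => rw [hσ]
  rw [map_sum]
  simp_rw [map_sum, _root_.map_smul, Matrix.sum_apply, Matrix.smul_apply, smul_eq_mul]

lemma sum_comm3 {α β γ : Type*} [Fintype α] [Fintype β] [Fintype γ]
    (f : α → β → γ → ℂ) :
    ∑ a : α, ∑ b : β, ∑ c : γ, f a b c = ∑ c : γ, ∑ a : α, ∑ b : β, f a b c := by
  have h1 : ∀ a : α, ∑ b : β, ∑ c : γ, f a b c = ∑ c : γ, ∑ b : β, f a b c :=
    fun a => Finset.sum_comm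
  simp_rw [h1]
  exact Finset.sum_comm

lemma diagonal_eq_sum_std (f : QIdx d n → ℂ) :
    Matrix.diagonal f = ∑ i : QIdx d n, f i • Matrix.single i i (1 : ℂ) := by
  conv_lhs => rw [Matrix.matrix_eq_sum_single (Matrix.diagonal f)]
  refine Finset.sum_congr rfl fun i _ => ?_
  rw [Finset.sum_eq_single i]
  · rw [Matrix.diagonal_apply_eq, Matrix.smul_single, smul_eq_mul, mul_one]
  · intro j _ hj
    rw [Matrix.diagonal_apply_ne _ (Ne.symm hj), Matrix.single_zero]
  · intro h
    exact absurd (Finset.mem_univ i) h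

lemma sum_comm3' {α β γ : Type*} [Fintype α] [Fintype β] [Fintype γ]
    (f : α → β → γ → ℂ) :
    ∑ a : α, ∑ b : β, ∑ c : γ, f a b c = ∑ b : β, ∑ c : γ, ∑ a : α, f a b c := by
  rw [Finset.sum_comm]
  exact Finset.sum_congr rfl fun b _ => Finset.sum_comm

lemma rc_apply (M : QIdx d n → (QMat d n →ₗ[ℂ] QMat d n)) (k : QIdx d n) (ρ : QMat d n)
    (p q : QIdx d n) :
    rc d n M k ρ p q = if p = q then
      (1 / (d : ℂ) ^ n) * ∑ x : QIdx d n, ∑ i : QIdx d n,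
        ρ (i + x) (i + x) *
          (M (k - x) (Matrix.single i i (1 : ℂ))) (p - x) (p - x)
    else 0 := by
  have hterm : ∀ a b x : QIdx d n,
      (WX d n x * WZ d n a *
        (M (k - x) (WZ d n b * (WX d n (-x) * ρ * (WX d n (-x))ᴴ) * (WZ d n b)ᴴ)) *
        (WZ d n a)ᴴ * (WX d n x)ᴴ) p q
      = chi d n a (p - q) * ∑ i : QIdx d n, ∑ j : QIdx d n, chi d n b (i - j) *
          (ρ (i + x) (j + x) *
            (M (k - x) (Matrix.single i j (1 : ℂ))) (p - x) (q - x)) := by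
    intro a b x
    rw [sandwich_apply, chi_mul_conj, sub_sub_sub_cancel_right, map_matrix_apply]
    congr 1
    refine Finset.sum_congr rfl fun i _ => ?_
    refine Finset.sum_congr rfl fun j _ => ?_
    rw [inner_apply, ← chi_mul_conj]
    ring
  rw [rc, Matrix.smul_apply, smul_eq_mul, Matrix.sum_apply]
  simp_rw [Matrix.sum_apply]
  simp_rw [hterm]
  simp_rw [← Finset.mul_sum]
  rw [← Finset.sum_mul, sum_chi]
  by_cases hpq : p = q
  · subst hpq
    rw [if_pos rfl, if_pos (sub_self p)]
    have hx : ∀ x : QIdx d n,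
        (∑ b : QIdx d n, ∑ i : QIdx d n, ∑ j : QIdx d n, chi d n b (i - j) *
          (ρ (i + x) (j + x) *
            (M (k - x) (Matrix.single i j (1 : ℂ))) (p - x) (p - x)))
        = (d : ℂ) ^ n * ∑ i : QIdx d n, ρ (i + x) (i + x) *
            (M (k - x) (Matrix.single i i (1 : ℂ))) (p - x) (p - x) := by
      intro x
      rw [sum_comm3']
      simp_rw [← Finset.sum_mul, sum_chi]
      rw [Finset.mul_sum]
      refine Finset.sum_congr rfl fun i _ => ?_
      rw [Finset.sum_eq_single i]
      · rw [sub_self, if_pos rfl]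
      · intro j _ hj
        rw [if_neg (fun h => hj (sub_eq_zero.mp h).symm), zero_mul]
      · intro h
        exact absurd (Finset.mem_univ i) h
    have hbx : (∑ b : QIdx d n, ∑ x : QIdx d n, ∑ i : QIdx d n, ∑ j : QIdx d n,
          chi d n b (i - j) * (ρ (i + x) (j + x) *
            (M (k - x) (Matrix.single i j (1 : ℂ))) (p - x) (p - x)))
        = (d : ℂ) ^ n * ∑ x : QIdx d n, ∑ i : QIdx d n, ρ (i + x) (i + x) *
            (M (k - x) (Matrix.single i i (1 : ℂ))) (p - x) (p - x) := by
      rw [Finset.sum_comm]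
      rw [Finset.sum_congr rfl fun x _ => hx x]
      rw [← Finset.mul_sum]
    rw [hbx]
    have hd0 : (d : ℂ) ≠ 0 := by
      exact_mod_cast Nat.cast_ne_zero.mpr (NeZero.ne d)
    have h3 : ((d : ℂ)) ^ (3 * n) = (d : ℂ) ^ n * (d : ℂ) ^ n * (d : ℂ) ^ n := by
      rw [show 3 * n = n + n + n by ring, pow_add, pow_add]
    rw [h3]
    field_simp
  · rw [if_neg (fun h => hpq (sub_eq_zero.mp h)), if_neg hpq, zero_mul, mul_zero]

lemma trace_WZconj_mul (t : QIdx d n) (N : QMat d n) :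
    ((WZ d n t)ᴴ * N).trace = ∑ j : QIdx d n, (starRingEnd ℂ) (chi d n t j) * N j j := by
  rw [WZ, Matrix.diagonal_conjTranspose, Matrix.trace]
  refine Finset.sum_congr rfl fun j _ => ?_
  rw [Matrix.diag_apply, Matrix.diagonal_mul]
  simp [Complex.star_def]

lemma chi_combine (s t m i j a b : QIdx d n) :
    (starRingEnd ℂ) (chi d n m (s - t)) * ((starRingEnd ℂ) (chi d n t j) *
        (chi d n s i * ((starRingEnd ℂ) (chi d n s a) * chi d n t b)))
      = chi d n s (i - a - m) * chi d n t (b + m - j) := by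
  have h1 : chi d n m (s - t) = chi d n s m * (starRingEnd ℂ) (chi d n t m) := by
    rw [← chi_mul_conj m s t, chi_comm m s, chi_comm m t]
  rw [h1, _root_.map_mul, Complex.conj_conj]
  rw [← chi_mul_conj s (i - a) m, ← chi_mul_conj s i a,
    ← chi_mul_conj t (b + m) j, ← chi_mul t b m]
  ring

lemma nu_formula (M : QIdx d n → (QMat d n →ₗ[ℂ] QMat d n)) (a b : QIdx d n) :
    ((1 / (d : ℂ) ^ (2 * n)) *
        ∑ s : QIdx d n, ∑ t : QIdx d n,
          gpf d n M s t * (starRingEnd ℂ) (chi d n s a) * chi d n t b)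
      = (1 / (d : ℂ) ^ n) * ∑ m : QIdx d n,
          (M m (Matrix.single (a + m) (a + m) (1 : ℂ))) (b + m) (b + m) := by
  have hWZ : ∀ (m j s : QIdx d n),
      (M m (WZ d n s)) j j = ∑ i : QIdx d n,
        chi d n s i * (M m (Matrix.single i i (1 : ℂ))) j j := by
    intro m j s
    rw [WZ, diagonal_eq_sum_std, map_sum]
    simp_rw [_root_.map_smul, Matrix.sum_apply, Matrix.smul_apply, smul_eq_mul]
  have hgpf : ∀ s t : QIdx d n,
      gpf d n M s t * (starRingEnd ℂ) (chi d n s a) * chi d n t b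
        = (1 / (d : ℂ) ^ n) * ∑ m : QIdx d n, ∑ i : QIdx d n, ∑ j : QIdx d n,
            chi d n s (i - a - m) * (chi d n t (b + m - j) *
              (M m (Matrix.single i i (1 : ℂ))) j j) := by
    intro s t
    rw [gpf]
    simp_rw [trace_WZconj_mul, hWZ]
    rw [mul_assoc, mul_assoc]
    congr 1
    rw [Finset.sum_mul]
    refine Finset.sum_congr rfl fun m _ => ?_
    simp_rw [Finset.mul_sum, Finset.sum_mul]
    rw [Finset.sum_comm]
    refine Finset.sum_congr rfl fun i _ => ?_
    refine Finset.sum_congr rfl fun j _ => ?_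
    linear_combination ((M m (Matrix.single i i (1 : ℂ))) j j) *
      chi_combine s t m i j a b
  simp_rw [hgpf]
  have hc : ∀ s : QIdx d n, (∑ t : QIdx d n, (1 / (d : ℂ) ^ n) *
      ∑ m : QIdx d n, ∑ i : QIdx d n, ∑ j : QIdx d n,
        chi d n s (i - a - m) * (chi d n t (b + m - j) *
          (M m (Matrix.single i i (1 : ℂ))) j j))
      = (1 / (d : ℂ) ^ n) * ∑ t : QIdx d n,
          ∑ m : QIdx d n, ∑ i : QIdx d n, ∑ j : QIdx d n,
            chi d n s (i - a - m) * (chi d n t (b + m - j) *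
              (M m (Matrix.single i i (1 : ℂ))) j j) :=
    fun s => (Finset.mul_sum _ _ _).symm
  simp_rw [hc]
  rw [← Finset.mul_sum]
  have h5 : (∑ s : QIdx d n, ∑ t : QIdx d n, ∑ m : QIdx d n, ∑ i : QIdx d n, ∑ j : QIdx d n,
        chi d n s (i - a - m) * (chi d n t (b + m - j) *
          (M m (Matrix.single i i (1 : ℂ))) j j))
      = ∑ m : QIdx d n, ∑ i : QIdx d n, ∑ j : QIdx d n, ∑ s : QIdx d n, ∑ t : QIdx d n,
        chi d n s (i - a - m) * (chi d n t (b + m - j) *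
          (M m (Matrix.single i i (1 : ℂ))) j j) := by
    rw [sum_comm3]
    refine Finset.sum_congr rfl fun m _ => ?_
    rw [sum_comm3]
    refine Finset.sum_congr rfl fun i _ => ?_
    rw [sum_comm3]
  rw [h5]
  have hst : ∀ m i j : QIdx d n,
      (∑ s : QIdx d n, ∑ t : QIdx d n, chi d n s (i - a - m) * (chi d n t (b + m - j) *
        (M m (Matrix.single i i (1 : ℂ))) j j))
      = (if i - a - m = 0 then (d : ℂ) ^ n else 0) *
          ((if b + m - j = 0 then (d : ℂ) ^ n else 0) *
            (M m (Matrix.single i i (1 : ℂ))) j j) := by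
    intro m i j
    have h1 : ∀ s : QIdx d n,
        (∑ t : QIdx d n, chi d n s (i - a - m) * (chi d n t (b + m - j) *
          (M m (Matrix.single i i (1 : ℂ))) j j))
        = chi d n s (i - a - m) * ((∑ t : QIdx d n, chi d n t (b + m - j)) *
            (M m (Matrix.single i i (1 : ℂ))) j j) := by
      intro s
      rw [← Finset.mul_sum, ← Finset.sum_mul]
    simp_rw [h1, sum_chi]
    rw [← Finset.sum_mul, sum_chi]
  simp_rw [hst]
  have hj : ∀ m i : QIdx d n,
      (∑ j : QIdx d n, (if i - a - m = 0 then (d : ℂ) ^ n else 0) *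
        ((if b + m - j = 0 then (d : ℂ) ^ n else 0) *
          (M m (Matrix.single i i (1 : ℂ))) j j))
      = (if i - a - m = 0 then (d : ℂ) ^ n else 0) *
          ((d : ℂ) ^ n * (M m (Matrix.single i i (1 : ℂ))) (b + m) (b + m)) := by
    intro m i
    rw [← Finset.mul_sum]
    congr 1
    rw [Finset.sum_eq_single (b + m)]
    · rw [sub_self, if_pos rfl]
    · intro j _ hj'
      rw [if_neg (fun h => hj' (sub_eq_zero.mp h).symm), zero_mul]
    · intro h
      exact absurd (Finset.mem_univ _) h
  simp_rw [hj]
  have hi : ∀ m : QIdx d n,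
      (∑ i : QIdx d n, (if i - a - m = 0 then (d : ℂ) ^ n else 0) *
        ((d : ℂ) ^ n * (M m (Matrix.single i i (1 : ℂ))) (b + m) (b + m)))
      = (d : ℂ) ^ n * ((d : ℂ) ^ n *
          (M m (Matrix.single (a + m) (a + m) (1 : ℂ))) (b + m) (b + m)) := by
    intro m
    rw [Finset.sum_eq_single (a + m)]
    · rw [if_pos (by rw [sub_sub]; exact sub_self _)]
    · intro i _ hi'
      rw [if_neg (fun h => hi' (by rw [sub_sub] at h; exact sub_eq_zero.mp h)), zero_mul]
    · intro h
      exact absurd (Finset.mem_univ _) h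
  simp_rw [hi, ← Finset.mul_sum]
  have hd0 : (d : ℂ) ≠ 0 := Nat.cast_ne_zero.mpr (NeZero.ne d)
  have h2 : ((d : ℂ)) ^ (2 * n) = (d : ℂ) ^ n * (d : ℂ) ^ n := by
    rw [two_mul, pow_add]
  rw [h2]
  field_simp

lemma rhs_apply (ν : QIdx d n → QIdx d n → ℂ) (ρ : QMat d n) (k p q : QIdx d n) :
    (∑ a : QIdx d n, ∑ b : QIdx d n,
        (ν a b * ρ (k + a) (k + a)) • Matrix.single (k + b) (k + b) (1 : ℂ)) p q
      = if p = q then ∑ a : QIdx d n, ν a (p - k) * ρ (k + a) (k + a) else 0 := by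
  simp only [Matrix.sum_apply, Matrix.smul_apply, smul_eq_mul]
  by_cases hpq : p = q
  · subst hpq
    rw [if_pos rfl]
    refine Finset.sum_congr rfl fun a _ => ?_
    rw [Finset.sum_eq_single (p - k)]
    · have hk : k + (p - k) = p := by abel
      rw [hk, Matrix.single_apply_same, mul_one]
    · intro b _ hb
      have hne : k + b ≠ p := fun h => hb (by rw [← h]; abel)
      rw [Matrix.single_apply_of_ne (h := fun hc => hne hc.1), mul_zero]
    · intro h
      exact absurd (Finset.mem_univ _) h
  · rw [if_neg hpq]
    refine Finset.sum_eq_zero fun a _ => Finset.sum_eq_zero fun b _ => ?_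
    have : ¬(k + b = p ∧ k + b = q) := fun hc => hpq (hc.1 ▸ hc.2 ▸ rfl)
    rw [Matrix.single_apply_of_ne (h := this), mul_zero]

end RCAux

/-- With `ν_{a,b} = d^{-2n} Σ_{s,t} ν̃_{s,t}(M) χ_s(a)^* χ_t(b)`, the
randomized compilation satisfies
`M̂_k(ρ) = Σ_{a,b} ν_{a,b} ⟨k+a|ρ|k+a⟩ |k+b⟩⟨k+b|`. -/
theorem rc_eq_register_shift_expansion
    (d n : ℕ) [NeZero d] (hd : 2 ≤ d) (hn : 1 ≤ n)
    (M : QIdx d n → (QMat d n →ₗ[ℂ] QMat d n))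
    (ν : QIdx d n → QIdx d n → ℂ)
    (hν : ∀ a b : QIdx d n, ν a b =
      (1 / (d : ℂ) ^ (2 * n)) *
        ∑ s : QIdx d n, ∑ t : QIdx d n,
          gpf d n M s t * (starRingEnd ℂ) (chi d n s a) * chi d n t b)
    (k : QIdx d n) (ρ : QMat d n) :
    rc d n M k ρ =
      ∑ a : QIdx d n, ∑ b : QIdx d n,
        (ν a b * ρ (k + a) (k + a)) • Matrix.single (k + b) (k + b) (1 : ℂ) := by
  ext p q
  rw [RCAux.rc_apply M k ρ p q, RCAux.rhs_apply ν ρ k p q]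
  by_cases hpq : p = q
  · subst hpq
    rw [if_pos rfl, if_pos rfl]
    have hν' : ∀ a : QIdx d n, ν a (p - k)
        = (1 / (d : ℂ) ^ n) * ∑ m : QIdx d n,
            (M m (Matrix.single (a + m) (a + m) (1 : ℂ))) ((p - k) + m) ((p - k) + m) :=
      fun a => (hν a (p - k)).trans (RCAux.nu_formula M a (p - k))
    simp_rw [hν']
    have hpull : ∀ a : QIdx d n,
        ((1 / (d : ℂ) ^ n) * ∑ m : QIdx d n,
            (M m (Matrix.single (a + m) (a + m) (1 : ℂ))) ((p - k) + m) ((p - k) + m)) *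
          ρ (k + a) (k + a)
        = (1 / (d : ℂ) ^ n) * ∑ m : QIdx d n, ρ (k + a) (k + a) *
            (M m (Matrix.single (a + m) (a + m) (1 : ℂ))) ((p - k) + m) ((p - k) + m) := by
      intro a
      rw [mul_assoc]
      congr 1
      rw [Finset.sum_mul]
      exact Finset.sum_congr rfl fun m _ => mul_comm _ _
    simp_rw [hpull]
    rw [← Finset.mul_sum]
    congr 1
    rw [← Finset.sum_product', ← Finset.sum_product']
    simp only [Finset.univ_product_univ]
    refine Fintype.sum_equiv
      ⟨fun w => (w.2 - k + w.1, k - w.1), fun w => (k - w.2, w.1 + w.2), ?_, ?_⟩ _ _ ?_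
    · rintro ⟨x, i⟩
      simp only [Prod.mk.injEq]
      constructor <;> abel
    · rintro ⟨a, m⟩
      simp only [Prod.mk.injEq]
      constructor <;> abel
    · rintro ⟨x, i⟩
      dsimp only [Equiv.coe_fn_mk]
      have e1 : k + (i - k + x) = i + x := by abel
      have e2 : (i - k + x) + (k - x) = i := by abel
      have e3 : (p - k) + (k - x) = p - x := by abel
      rw [e1, e2, e3]
  · rw [if_neg hpq, if_neg hpq]
end
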